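/- (Theorem 3, low-dimensional support; doubling-dimension form.) There is a universal constant C > 0 such that the following holds. Let (𝒟,h) be a separable binary classification task on ℝ^d with supp(𝒟) bounded, let f be a measurable classifier, let ε > 0, β > 1, and suppose the εβ-doubling dimension of supp(𝒟) (with the ℓ₂ metric inherited from ℝ^d) is at most d'. Let g_Π be the smoothed classifier obtained from the ball carving partition Π of supp(𝒟) with parameter εβ. Then 𝔼_{R,σ}[AR(g_Π, ε)] ≤ 2·S(εβ) + 2·R(f) + C·(d'+1)/β; moreover, if AR(ε) > 0 then 𝔼_{R,σ}[AR(g_Π, ε)] ≤ (2·S(εβ)/S(2ε))·AR(ε) + 2·R(f) + C·(d'+1)/β. -/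

import Mathlib

open MeasureTheory Metric Set
open scoped ENNReal NNReal

noncomputable section

/-- The Euclidean space `ℝ^d` with the `ℓ₂` metric. -/
abbrev Euc (d : ℕ) := EuclideanSpace ℝ (Fin d)

/-- A (binary) classifier: a measurable function with values in `{-1, 1}`. -/
def IsClassifier {d : ℕ} (f : Euc d → ℝ) : Prop :=
  Measurable f ∧ ∀ x, f x = 1 ∨ f x = -1

/-- The (standard) risk `R(f) = ℙ_{X ∼ 𝒟}(f(X) ≠ h(X))` of a classifier `f`
with respect to the data distribution `𝒟` and the ground truth `h`. -/
def risk {d : ℕ} (𝒟 : Measure (Euc d)) (h f : Euc d → ℝ) : ℝ≥0∞ :=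
  𝒟 {x | f x ≠ h x}

/-- The adversarial risk
`AR(f,ε) = ℙ_{X ∼ 𝒟}(∃ η, ‖η‖₂ < ε ∧ f(X+η) ≠ h(X))`. -/
def advRisk {d : ℕ} (𝒟 : Measure (Euc d)) (h f : Euc d → ℝ) (ε : ℝ) : ℝ≥0∞ :=
  𝒟 {x | ∃ η : Euc d, ‖η‖ < ε ∧ f (x + η) ≠ h x}

/-- `AR(ε)`: the infimum of the adversarial risk over all measurable classifiers. -/
def optAdvRisk {d : ℕ} (𝒟 : Measure (Euc d)) (h : Euc d → ℝ) (ε : ℝ) : ℝ≥0∞ :=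
  ⨅ (f : Euc d → ℝ) (_ : IsClassifier f), advRisk 𝒟 h f ε

/-- The `ℓ₂` distance between two sets, as an extended nonnegative real
(`∞` if one of the sets is empty). -/
def setEDist {d : ℕ} (A B : Set (Euc d)) : ℝ≥0∞ :=
  ⨅ a ∈ A, ⨅ b ∈ B, edist a b

/-- The separation function `S(ε)`: the infimum, over measurable sets `E` whose
removal separates the two classes `M₋ = h⁻¹({-1})` and `M₊ = h⁻¹({1})` by
distance at least `ε`, of the probability mass of `E`. -/
def sep {d : ℕ} (𝒟 : Measure (Euc d)) (h : Euc d → ℝ) (ε : ℝ) : ℝ≥0∞ :=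
  ⨅ (E : Set (Euc d)) (_ : MeasurableSet E)
    (_ : ENNReal.ofReal ε ≤ setEDist (h ⁻¹' {-1} \ E) (h ⁻¹' {1} \ E)), 𝒟 E

/-- The support of a Borel measure on `ℝ^d`: the set of points all of whose
neighborhoods have positive mass. -/
def msupport {d : ℕ} (𝒟 : Measure (Euc d)) : Set (Euc d) :=
  {x | ∀ r : ℝ, 0 < r → 0 < 𝒟 (ball x r)}

/-- `sgn t = 1` if `t ≥ 0` and `sgn t = -1` otherwise. -/
def sgn (t : ℝ) : ℝ := if 0 ≤ t then 1 else -1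

/-- `sgn (𝔼_{Z ∼ 𝒟}[f(Z) ∣ Z ∈ A])`: the sign of the conditional expectation of
`f` under `𝒟` given the block `A`. -/
def smoothVal {d : ℕ} (𝒟 : Measure (Euc d)) (f : Euc d → ℝ) (A : Set (Euc d)) : ℝ :=
  sgn ((∫ z in A, f z ∂𝒟) / (𝒟 A).toReal)

/-- The block `Π̂(uᵢ) = B_R(uᵢ) \\ ⋃_{j : σ(j) < σ(i)} B_R(uⱼ)` of the ball
carving partition built from the net `u`, radius `R` and order `σ`. -/
def carvBlock {d n : ℕ} (u : Fin n → Euc d) (R : ℝ) (σ : Equiv.Perm (Fin n))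
    (i : Fin n) : Set (Euc d) :=
  ball (u i) R \ ⋃ j ∈ {j | σ j < σ i}, ball (u j) R

/-- The uniform probability measure on the interval `Ioc a b`. -/
def unifIoc (a b : ℝ) : Measure ℝ :=
  (volume (Set.Ioc a b))⁻¹ • volume.restrict (Set.Ioc a b)

instance (n : ℕ) : MeasurableSpace (Equiv.Perm (Fin n)) := ⊤

/-- The uniform probability measure on permutations of `Fin n` (a uniformly
random linear order of the net). -/
def unifPerm (n : ℕ) : Measure (Equiv.Perm (Fin n)) :=
  (Measure.count (Set.univ : Set (Equiv.Perm (Fin n))))⁻¹ • Measure.count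

/-- The joint distribution of the randomness `(R, σ)` of the ball carving
partition with parameter `ε`: `R` uniform on `(ε/4, ε/2]` and `σ` a uniformly
random order, independent. -/
def carvMeasure (ε : ℝ) (n : ℕ) : Measure (ℝ × Equiv.Perm (Fin n)) :=
  (unifIoc (ε / 4) (ε / 2)).prod (unifPerm n)

/-- The doubling constant of a metric space at scale `ε`: the smallest `λ : ℕ`
such that every ball of radius at most `ε` can be covered by `λ` balls of half
the radius. -/
def doublingConstant (M : Type*) [PseudoMetricSpace M] (ε : ℝ) : ℕ :=
  sInf {l : ℕ | ∀ (x : M) (r : ℝ), 0 < r → r ≤ ε →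
    ∃ T : Finset M, T.card ≤ l ∧ ball x r ⊆ ⋃ y ∈ T, ball y (r / 2)}

/-- The `ε`-doubling dimension `dd(M,ε) = log₂ λ` of a metric space. -/
def ddim (M : Type*) [PseudoMetricSpace M] (ε : ℝ) : ℝ :=
  Real.logb 2 (doublingConstant M ε)

/-!
Put `Δ = εβ` and fix a set `E` whose removal separates the two classes at distance `Δ`. A block
of the carving has diameter `< 2R ≤ Δ`, so off `E` the ground truth is constant on it, and the
majority vote of `f` on the block errs on at most twice the mass of `E` plus twice the mass of the
errors of `f` there. If the `ε`-ball around a support point lies in one block, the smoothed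
classifier is constant on it; this gives the bound `2·𝒟(E) + 2·R(f)` up to the mass of the points
whose `ε`-ball is cut. The ball is cut only if the sphere of radius `R` around some net point
meets it, which has probability `≤ 8ε/Δ` over `R`, and that net point comes first in `σ` among
all net points at most as far away, which for the `k`-th closest has probability `≤ 1/k`. By
packing, at most `λ⁴` net points are `Δ`-close to a support point (`λ` the doubling constant), so
the expected cut mass is `≤ (8/β)(1 + log λ⁴) ≤ 32(d'+1)/β`. For `β < 2` this exceeds `1`.
Finally `S(2ε) ≤ AR(ε)`: two oppositely labelled points closer than `2ε` share their midpoint as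
a perturbation.
-/

open scoped Finset

section Support

variable {d : ℕ}

lemma isClosed_msupport (𝒟 : Measure (Euc d)) : IsClosed (msupport 𝒟) := by
  refine isOpen_compl_iff.mp (Metric.isOpen_iff.mpr fun x hx => ?_)
  simp only [msupport, mem_compl_iff, mem_ofPred_eq, not_forall, not_lt] at hx
  obtain ⟨r, hr, hx⟩ := hx
  refine ⟨r / 2, by positivity, fun y hy hy' => ?_⟩
  have hsub : ball y (r / 2) ⊆ ball x r := ball_subset_ball' (by rw [mem_ball] at hy; linarith)
  exact (hy' (r / 2) (by positivity)).not_ge ((measure_mono hsub).trans hx)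

lemma measure_compl_msupport (𝒟 : Measure (Euc d)) : 𝒟 (msupport 𝒟)ᶜ = 0 := by
  have hnull : ∀ y : ↥(msupport 𝒟)ᶜ, ∃ r : ℝ, 0 < r ∧ 𝒟 (ball (y : Euc d) r) = 0 := by
    rintro ⟨y, hy⟩
    simp only [msupport, mem_compl_iff, mem_ofPred_eq, not_forall, not_lt, nonpos_iff_eq_zero]
      at hy
    obtain ⟨r, hr, h0⟩ := hy
    exact ⟨r, hr, h0⟩
  choose r hr h0 using hnull
  obtain ⟨t, htc, hteq⟩ := TopologicalSpace.isOpen_iUnion_countable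
    (fun y : ↥(msupport 𝒟)ᶜ => ball (y : Euc d) (r y)) fun _ => isOpen_ball
  have hsub : (msupport 𝒟)ᶜ ⊆ ⋃ y ∈ t, ball (y : Euc d) (r y) :=
    hteq ▸ fun y hy => mem_iUnion.mpr ⟨⟨y, hy⟩, mem_ball_self (hr ⟨y, hy⟩)⟩
  exact measure_mono_null hsub ((measure_biUnion_null_iff htc).mpr fun y _ => h0 y)

end Support

section Separation

variable {d : ℕ}

lemma setEDist_le_edist {A B : Set (Euc d)} {a b : Euc d} (ha : a ∈ A) (hb : b ∈ B) :
    setEDist A B ≤ edist a b :=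
  iInf₂_le_of_le a ha (iInf₂_le b hb)

lemma ofReal_le_setEDist {A B : Set (Euc d)} {r : ℝ}
    (h : ∀ a ∈ A, ∀ b ∈ B, r ≤ dist a b) : ENNReal.ofReal r ≤ setEDist A B :=
  le_iInf₂ fun a ha => le_iInf₂ fun b hb => by
    rw [edist_dist]; exact ENNReal.ofReal_le_ofReal (h a ha b hb)

variable (𝒟 : Measure (Euc d)) (h : Euc d → ℝ)

lemma sep_le {ε : ℝ} {E : Set (Euc d)} (hE : MeasurableSet E)
    (hsep : ENNReal.ofReal ε ≤ setEDist (h ⁻¹' {-1} \ E) (h ⁻¹' {1} \ E)) :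
    sep 𝒟 h ε ≤ 𝒟 E :=
  iInf₂_le_of_le E hE (iInf_le _ hsep)

lemma sep_le_one [IsProbabilityMeasure 𝒟] (ε : ℝ) : sep 𝒟 h ε ≤ 1 :=
  measure_univ (μ := 𝒟) ▸ sep_le 𝒟 h MeasurableSet.univ
    (le_iInf₂ fun _ ha => absurd (mem_univ _) ha.2)

lemma le_two_mul_sep_add {ε : ℝ} {X c : ℝ≥0∞}
    (hX : ∀ E, MeasurableSet E →
      ENNReal.ofReal ε ≤ setEDist (h ⁻¹' {-1} \ E) (h ⁻¹' {1} \ E) → X ≤ 2 * 𝒟 E + c) :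
    X ≤ 2 * sep 𝒟 h ε + c := by
  simp only [sep, ENNReal.mul_iInf_of_ne two_ne_zero ENNReal.ofNat_ne_top, ENNReal.iInf_add]
  exact le_iInf fun E => le_iInf fun hE => le_iInf fun hsep => hX E hE hsep

/-- Two points of opposite labels at distance `< 2ε` have a common `ε`-perturbation, the
midpoint, so every classifier errs adversarially at one of them. -/
lemma sep_two_mul_le_advRisk (f : Euc d → ℝ) (ε : ℝ) :
    sep 𝒟 h (2 * ε) ≤ advRisk 𝒟 h f ε := by
  rw [advRisk, measure_eq_iInf]
  refine le_iInf₂ fun t hsub => le_iInf fun ht => sep_le 𝒟 h ht ?_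
  refine ofReal_le_setEDist fun a ha b hb => ?_
  by_contra! hlt
  have hrobust : ∀ x ∉ t, ∀ η : Euc d, ‖η‖ < ε → f (x + η) = h x := fun x hx η hη =>
    by_contra fun hne => hx (hsub ⟨η, hη, hne⟩)
  have hnear : ∀ x y : Euc d, dist x y < 2 * ε → ‖midpoint ℝ x y - x‖ < ε := fun x y hxy => by
    rw [← dist_eq_norm, dist_midpoint_left]; norm_num; linarith
  have h₁ := hrobust a ha.2 _ (hnear a b hlt)
  have h₂ := hrobust b hb.2 _ (hnear b a (dist_comm a b ▸ hlt))
  rw [add_sub_cancel, ha.1] at h₁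
  rw [add_sub_cancel, midpoint_comm, hb.1, h₁] at h₂
  norm_num at h₂

lemma sep_two_mul_le_optAdvRisk (ε : ℝ) : sep 𝒟 h (2 * ε) ≤ optAdvRisk 𝒟 h ε :=
  le_iInf₂ fun f _ => sep_two_mul_le_advRisk 𝒟 h f ε

end Separation

lemma le_div_mul_of_le (a : ℝ≥0∞) {s A : ℝ≥0∞} (hsA : s ≤ A) (hA : 0 < A) (hs : s ≠ ⊤) :
    a ≤ a / s * A := by
  rcases eq_or_ne a 0 with rfl | ha
  · simp
  rcases eq_or_ne s 0 with rfl | hs0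
  · rw [ENNReal.div_zero ha, ENNReal.top_mul hA.ne']
    exact le_top
  · calc a = a / s * s := (ENNReal.div_mul_cancel hs0 hs).symm
      _ ≤ a / s * A := mul_le_mul_right hsA _

section RandomCarving

lemma isProbabilityMeasure_unifIoc {a b : ℝ} (hab : a < b) :
    IsProbabilityMeasure (unifIoc a b) := by
  constructor
  rw [unifIoc, Measure.smul_apply, Measure.restrict_apply MeasurableSet.univ, univ_inter,
    Real.volume_Ioc, smul_eq_mul]
  exact ENNReal.inv_mul_cancel (by simpa using hab) ENNReal.ofReal_ne_top

lemma unifIoc_le {a b : ℝ} (s : Set ℝ) (hs : MeasurableSet s) :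
    unifIoc a b s ≤ (ENNReal.ofReal (b - a))⁻¹ * volume s := by
  rw [unifIoc, Measure.smul_apply, smul_eq_mul, Measure.restrict_apply hs, Real.volume_Ioc]
  exact mul_le_mul_right (measure_mono inter_subset_left) _

variable {n : ℕ}

instance : MeasurableSingletonClass (Equiv.Perm (Fin n)) := ⟨fun _ => trivial⟩

lemma unifPerm_apply (s : Finset (Equiv.Perm (Fin n))) :
    unifPerm n s = (Fintype.card (Equiv.Perm (Fin n)) : ℝ≥0∞)⁻¹ * #s := by
  rw [unifPerm, Measure.smul_apply, smul_eq_mul, ← Finset.coe_univ,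
    Measure.count_apply_finset, Measure.count_apply_finset, Finset.card_univ]

instance : IsProbabilityMeasure (unifPerm n) := by
  constructor
  rw [← Finset.coe_univ, unifPerm_apply, Finset.card_univ]
  exact ENNReal.inv_mul_cancel (by simp) (ENNReal.natCast_ne_top _)

lemma isProbabilityMeasure_carvMeasure {ε : ℝ} (hε : 0 < ε) :
    IsProbabilityMeasure (carvMeasure ε n) := by
  have := isProbabilityMeasure_unifIoc (a := ε / 4) (b := ε / 2) (by linarith)
  rw [carvMeasure]
  infer_instance

lemma ae_carvMeasure_mem_Ioc {ε : ℝ} :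
    ∀ᵐ p ∂carvMeasure ε n, p.1 ∈ Ioc (ε / 4) (ε / 2) := by
  have hprod : {p : ℝ × Equiv.Perm (Fin n) | p.1 ∉ Ioc (ε / 4) (ε / 2)} =
      (Ioc (ε / 4) (ε / 2))ᶜ ×ˢ univ := by
    ext; simp
  rw [ae_iff, hprod, carvMeasure, Measure.prod_prod, unifIoc, Measure.smul_apply,
    Measure.restrict_apply measurableSet_Ioc.compl, compl_inter_self]
  simp

/-- Right multiplication by a transposition injects the orders in which `j` comes first among
`J` into those in which any other `i ∈ J` does, and these sets are disjoint. -/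
lemma card_mul_card_isFirst_le (J : Finset (Fin n)) {j : Fin n} (hj : j ∈ J) :
    #J * #{σ : Equiv.Perm (Fin n) | ∀ k ∈ J, k ≠ j → σ j < σ k} ≤
      Fintype.card (Equiv.Perm (Fin n)) := by
  classical
  set S : Fin n → Finset (Equiv.Perm (Fin n)) := fun i => {σ | ∀ k ∈ J, k ≠ i → σ i < σ k}
  have hswap : ∀ i ∈ J, #(S j) ≤ #(S i) := by
    intro i hi
    refine Finset.card_le_card_of_injOn (· * Equiv.swap j i) (fun σ hσ => ?_)
      (mul_left_injective _).injOn
    simp only [S, Finset.coe_filter, Finset.mem_univ, true_and, mem_ofPred_eq] at hσ ⊢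
    intro k hk hki
    rcases eq_or_ne k j with rfl | hkj
    · simpa using hσ i hi (Ne.symm hki)
    · simpa [Equiv.swap_apply_of_ne_of_ne hkj hki] using hσ k hk hkj
  have hdisj : (J : Set (Fin n)).PairwiseDisjoint S := by
    intro i hi i' hi' hne
    refine Finset.disjoint_left.mpr fun σ h₁ h₂ => ?_
    simp only [S, Finset.mem_filter, Finset.mem_univ, true_and] at h₁ h₂
    exact lt_asymm (h₁ i' hi' (Ne.symm hne)) (h₂ i hi hne)
  calc #J * #(S j) = ∑ _i ∈ J, #(S j) := by rw [Finset.sum_const, smul_eq_mul]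
    _ ≤ ∑ i ∈ J, #(S i) := Finset.sum_le_sum hswap
    _ = #(J.biUnion S) := (Finset.card_biUnion hdisj).symm
    _ ≤ Fintype.card (Equiv.Perm (Fin n)) := Finset.card_le_univ _

lemma unifPerm_isFirst_le (J : Finset (Fin n)) {j : Fin n} (hj : j ∈ J) :
    unifPerm n {σ | ∀ k ∈ J, k ≠ j → σ j < σ k} ≤ (#J : ℝ≥0∞)⁻¹ := by
  classical
  have hcard := card_mul_card_isFirst_le J hj
  set S : Finset (Equiv.Perm (Fin n)) := {σ | ∀ k ∈ J, k ≠ j → σ j < σ k}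
  have hS : {σ : Equiv.Perm (Fin n) | ∀ k ∈ J, k ≠ j → σ j < σ k} = S := by ext; simp [S]
  rw [hS, unifPerm_apply, ENNReal.le_inv_iff_mul_le, mul_assoc]
  calc (Fintype.card (Equiv.Perm (Fin n)) : ℝ≥0∞)⁻¹ * (#S * #J)
      ≤ (Fintype.card (Equiv.Perm (Fin n)) : ℝ≥0∞)⁻¹ * Fintype.card (Equiv.Perm (Fin n)) := by
        gcongr; rw [mul_comm]; exact_mod_cast hcard
    _ = 1 := ENNReal.inv_mul_cancel (by simp) (ENNReal.natCast_ne_top _)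

end RandomCarving

section Doubling

def IsDoublingAt (M : Type*) [PseudoMetricSpace M] (Δ : ℝ) (l : ℕ) : Prop :=
  ∀ (x : M) (r : ℝ), 0 < r → r ≤ Δ →
    ∃ T : Finset M, #T ≤ l ∧ ball x r ⊆ ⋃ y ∈ T, ball y (r / 2)

variable {M : Type*} [PseudoMetricSpace M] {Δ : ℝ} {l : ℕ}

lemma IsDoublingAt.exists_cover_pow (hl : IsDoublingAt M Δ l) (hΔ : 0 < Δ) (k : ℕ) (x : M) :
    ∃ T : Finset M, #T ≤ l ^ k ∧ ball x Δ ⊆ ⋃ y ∈ T, ball y (Δ / 2 ^ k) := by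
  classical
  induction k with
  | zero => exact ⟨{x}, by simp, by simp⟩
  | succ k ih =>
    obtain ⟨T, hTcard, hTcover⟩ := ih
    choose T' hT'card hT'cover using fun y : M =>
      hl y (Δ / 2 ^ k) (by positivity) (div_le_self hΔ.le (one_le_pow₀ one_le_two))
    refine ⟨T.biUnion T', ?_, fun z hz => ?_⟩
    · calc #(T.biUnion T') ≤ ∑ y ∈ T, #(T' y) := Finset.card_biUnion_le
        _ ≤ #T * l := Finset.sum_le_card_nsmul _ _ _ fun y _ => hT'card y
        _ ≤ l ^ (k + 1) := by rw [pow_succ]; exact Nat.mul_le_mul_right _ hTcard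
    · obtain ⟨y, hyT, hy⟩ := mem_iUnion₂.mp (hTcover hz)
      obtain ⟨w, hwT, hw⟩ := mem_iUnion₂.mp (hT'cover y hy)
      rw [div_div, ← pow_succ] at hw
      exact mem_iUnion₂.mpr ⟨w, Finset.mem_biUnion.mpr ⟨y, hyT, hwT⟩, hw⟩

/-- Cover `ball x Δ` by `l ^ 4` balls of radius `Δ / 16`; each of them contains at most one point
of a `Δ / 4`-separated set. -/
lemma IsDoublingAt.card_le_pow_four (hl : IsDoublingAt M Δ l) (hΔ : 0 < Δ) (x : M)
    (s : Finset M) (hs : ∀ a ∈ s, ∀ b ∈ s, a ≠ b → Δ / 4 ≤ dist a b)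
    (hsx : ∀ a ∈ s, a ∈ ball x Δ) : #s ≤ l ^ 4 := by
  obtain ⟨T, hTcard, hTcover⟩ := hl.exists_cover_pow hΔ 4 x
  have hcenter : ∀ a : s, ∃ y ∈ T, dist (a : M) y < Δ / 2 ^ 4 := fun a => by
    simpa using hTcover (hsx a a.2)
  choose φ hφT hφ using hcenter
  calc #s = Fintype.card s := (Fintype.card_coe s).symm
    _ ≤ Fintype.card T := Fintype.card_le_of_injective (fun a => (⟨φ a, hφT a⟩ : T))
        fun a b hab => by
        by_contra hne
        have hab' : φ a = φ b := congrArg Subtype.val hab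
        have := hs a a.2 b b.2 (Subtype.coe_ne_coe.mpr hne)
        have := dist_triangle_right (a : M) b (φ a)
        linarith [hφ a, hab' ▸ hφ b]
    _ ≤ l ^ 4 := (Fintype.card_coe T).trans_le hTcard

/-- Rescale a fixed finite `1/8`-cover of the closed unit ball, and move each of its centres to a
nearby point of the subset. -/
lemma exists_isDoublingAt_euclidean {d : ℕ} (s : Set (Euc d)) (Δ : ℝ) :
    ∃ l, IsDoublingAt s Δ l := by
  classical
  obtain ⟨t, -, htf, htcover⟩ :=
    (isCompact_closedBall (0 : Euc d) 1).finite_cover_balls (e := 1 / 8) (by norm_num)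
  refine ⟨#htf.toFinset, fun x r hr _ => ?_⟩
  have hnear : ∀ y : Euc d, ∃ p : s,
      (∃ q : s, dist (q : Euc d) (x + r • y) < r / 8) → dist (p : Euc d) (x + r • y) < r / 8 :=
    fun y => if h : ∃ q : s, dist (q : Euc d) (x + r • y) < r / 8 then ⟨h.choose, fun _ =>
      h.choose_spec⟩ else ⟨x, fun hc => absurd hc h⟩
  choose φ hφ using hnear
  refine ⟨htf.toFinset.image φ, Finset.card_image_le, fun z hz => ?_⟩
  have hz' : dist (z : Euc d) x < r := hz
  have hw : r⁻¹ • ((z : Euc d) - x) ∈ closedBall (0 : Euc d) 1 := by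
    rw [mem_closedBall, dist_zero_right, norm_smul, norm_inv, Real.norm_of_nonneg hr.le,
      inv_mul_le_iff₀ hr, mul_one, ← dist_eq_norm]
    exact hz'.le
  obtain ⟨y, hyt, hy⟩ := mem_iUnion₂.mp (htcover hw)
  have hzy : dist (z : Euc d) (x + r • y) < r / 8 := by
    have he : (z : Euc d) - (x + r • y) = r • (r⁻¹ • ((z : Euc d) - x) - y) := by
      rw [smul_sub, smul_inv_smul₀ hr.ne']; abel
    rw [dist_eq_norm, he, norm_smul, Real.norm_of_nonneg hr.le, ← dist_eq_norm]
    rw [mem_ball] at hy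
    nlinarith
  refine mem_iUnion₂.mpr ⟨φ y, Finset.mem_image_of_mem _ (htf.mem_toFinset.mpr hyt), ?_⟩
  have hφy := hφ y ⟨z, hzy⟩
  rw [mem_ball, Subtype.dist_eq]
  linarith [dist_triangle_right (z : Euc d) (φ y) (x + r • y)]

lemma isDoublingAt_doublingConstant {d : ℕ} (s : Set (Euc d)) (Δ : ℝ) :
    IsDoublingAt s Δ (doublingConstant s Δ) :=
  Nat.sInf_mem (exists_isDoublingAt_euclidean s Δ)

lemma ddim_nonneg (Δ : ℝ) : 0 ≤ ddim M Δ :=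
  div_nonneg (Real.log_natCast_nonneg _) (Real.log_nonneg one_le_two)

lemma eight_mul_div_mul_one_add_log_pow_four_le {ε β d' : ℝ} (hε : 0 < ε) (hβ : 0 < β) {l : ℕ}
    (hl : Real.logb 2 l ≤ d') :
    8 * ε / (ε * β) * (1 + Real.log ((l ^ 4 : ℕ) : ℝ)) ≤ 32 * (d' + 1) / β := by
  have hlog : Real.log l ≤ Real.logb 2 l :=
    le_div_self (Real.log_natCast_nonneg l) (Real.log_pos one_lt_two)
      (by linarith [Real.log_le_sub_one_of_pos (zero_lt_two : (0 : ℝ) < 2)])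
  rw [Nat.cast_pow, Real.log_pow, show 8 * ε / (ε * β) = 8 / β by field_simp, div_mul_eq_mul_div,
    div_le_div_iff_of_pos_right hβ]
  push_cast
  linarith

lemma card_dist_lt_le_doublingConstant_pow {d n : ℕ} {s : Set (Euc d)} {Δ : ℝ} (hΔ : 0 < Δ)
    {u : Fin n → Euc d} (hus : ∀ i, u i ∈ s) (husep : ∀ i j, i ≠ j → Δ / 4 ≤ dist (u i) (u j))
    {x : Euc d} (hx : x ∈ s) : #{j | dist x (u j) < Δ} ≤ doublingConstant s Δ ^ 4 := by
  classical
  set F : Finset (Fin n) := {j | dist x (u j) < Δ}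
  let v : Fin n → s := fun j => ⟨u j, hus j⟩
  have hv : Function.Injective v := fun i j hij => by
    by_contra hne
    have := husep i j hne
    rw [show u i = u j from congrArg Subtype.val hij, dist_self] at this
    linarith
  rw [← Finset.card_image_of_injective F hv]
  refine (isDoublingAt_doublingConstant s Δ).card_le_pow_four hΔ ⟨x, hx⟩ _ ?_ ?_
  · simp only [Finset.mem_image]
    rintro _ ⟨i, -, rfl⟩ _ ⟨j, -, rfl⟩ hne
    exact husep i j fun hij => hne (hij ▸ rfl)
  · simp only [Finset.mem_image]
    rintro _ ⟨j, hj, rfl⟩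
    rw [mem_ball, Subtype.dist_eq, dist_comm]
    exact (Finset.mem_filter.mp hj).2

end Doubling

section Majority

variable {d : ℕ} (𝒟 : Measure (Euc d)) [IsFiniteMeasure 𝒟] {f : Euc d → ℝ} {P : Set (Euc d)}

lemma IsClassifier.const_mul (hf : IsClassifier f) {c : ℝ} (hc : c = 1 ∨ c = -1) :
    IsClassifier fun x => c * f x :=
  ⟨hf.1.const_mul c, fun x => by rcases hc with rfl | rfl <;> rcases hf.2 x with h | h <;> simp [h]⟩

lemma setIntegral_classifier (hf : IsClassifier f) (P : Set (Euc d)) :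
    ∫ z in P, f z ∂𝒟 = 𝒟.real (f ⁻¹' {1} ∩ P) - 𝒟.real (f ⁻¹' {-1} ∩ P) := by
  have hmeas : ∀ c : ℝ, MeasurableSet (f ⁻¹' {c}) := fun c => hf.1 (measurableSet_singleton c)
  have hf_eq : ∀ x, f x = (f ⁻¹' {1}).indicator 1 x - (f ⁻¹' {-1}).indicator 1 x := fun x => by
    rcases hf.2 x with h | h <;> norm_num [indicator, h]
  have hint : ∀ c : ℝ, Integrable ((f ⁻¹' {c}).indicator (1 : Euc d → ℝ)) (𝒟.restrict P) :=
    fun c => (integrable_indicator_iff (hmeas c)).mpr (integrable_const (1 : ℝ)).integrableOn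
  rw [integral_congr_ae (ae_of_all _ hf_eq), integral_sub (hint 1) (hint (-1)),
    integral_indicator_one (hmeas 1), integral_indicator_one (hmeas (-1)),
    measureReal_restrict_apply (hmeas 1), measureReal_restrict_apply (hmeas (-1))]

lemma measure_le_two_mul_of_setIntegral_nonpos (hf : IsClassifier f)
    (hint : ∫ z in P, f z ∂𝒟 ≤ 0) : 𝒟 P ≤ 2 * 𝒟 (P ∩ f ⁻¹' {-1}) := by
  have hsplit : 𝒟 (P ∩ f ⁻¹' {1}) + 𝒟 (P ∩ f ⁻¹' {-1}) = 𝒟 P := by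
    convert measure_inter_add_sdiff P (hf.1 (measurableSet_singleton 1)) using 3
    ext x
    rcases hf.2 x with h | h <;> norm_num [h]
  have hle : 𝒟 (P ∩ f ⁻¹' {1}) ≤ 𝒟 (P ∩ f ⁻¹' {-1}) := by
    rw [setIntegral_classifier 𝒟 hf, sub_nonpos, inter_comm, inter_comm _ P] at hint
    exact (ENNReal.toReal_le_toReal (measure_ne_top _ _) (measure_ne_top _ _)).mp hint
  rw [← hsplit, two_mul]
  gcongr

lemma setIntegral_const_mul_nonpos_of_smoothVal_ne {c : ℝ} (hc : c = 1 ∨ c = -1)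
    (hne : smoothVal 𝒟 f P ≠ c) : ∫ z in P, c * f z ∂𝒟 ≤ 0 := by
  rw [integral_const_mul]
  unfold smoothVal sgn at hne
  rcases hc with rfl | rfl
  · by_contra! hpos
    exact hne (if_pos (div_nonneg (by linarith) ENNReal.toReal_nonneg))
  · have hnonneg : 0 ≤ (∫ z in P, f z ∂𝒟) / (𝒟 P).toReal := by
      by_contra hneg
      exact hne (if_neg hneg)
    rcases eq_or_ne (𝒟 P) 0 with hP0 | hP0
    · simp [Measure.restrict_eq_zero.mpr hP0]
    · have hpos : 0 < (𝒟 P).toReal := ENNReal.toReal_pos hP0 (measure_ne_top _ _)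
      linarith [((div_nonneg_iff.mp hnonneg).resolve_right fun h => h.2.not_gt hpos).1]

lemma measure_le_two_mul_of_smoothVal_ne (hf : IsClassifier f) {c : ℝ}
    (hc : c = 1 ∨ c = -1) (hne : smoothVal 𝒟 f P ≠ c) :
    𝒟 P ≤ 2 * 𝒟 (P ∩ {x | f x ≠ c}) := by
  convert measure_le_two_mul_of_setIntegral_nonpos 𝒟 (hf.const_mul hc)
    (setIntegral_const_mul_nonpos_of_smoothVal_ne 𝒟 hc hne) using 4
  ext x
  rcases hc with rfl | rfl <;> rcases hf.2 x with h | h <;> norm_num [h]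

lemma measure_inter_ne_smoothVal_le (hf : IsClassifier f) {h : Euc d → ℝ} {E : Set (Euc d)}
    {c : ℝ} (hc : c = 1 ∨ c = -1) (hpure : ∀ x ∈ P \ E, h x = c) :
    𝒟 (P ∩ {x | h x ≠ smoothVal 𝒟 f P}) ≤ 2 * 𝒟 (P ∩ E) + 2 * 𝒟 (P ∩ {x | f x ≠ h x}) := by
  by_cases hs : smoothVal 𝒟 f P = c
  · have hsub : P ∩ {x | h x ≠ smoothVal 𝒟 f P} ⊆ P ∩ E := fun x ⟨hxP, hx⟩ =>
      ⟨hxP, by_contra fun hxE => hx (by rw [hpure x ⟨hxP, hxE⟩, hs])⟩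
    calc 𝒟 (P ∩ {x | h x ≠ smoothVal 𝒟 f P}) ≤ 𝒟 (P ∩ E) := measure_mono hsub
      _ ≤ 2 * 𝒟 (P ∩ E) := le_mul_of_one_le_left zero_le one_le_two
      _ ≤ _ := le_self_add
  · have hsub : P ∩ {x | f x ≠ c} ⊆ (P ∩ E) ∪ (P ∩ {x | f x ≠ h x}) := fun x ⟨hxP, hx⟩ => by
      by_cases hxE : x ∈ E
      · exact Or.inl ⟨hxP, hxE⟩
      · exact Or.inr ⟨hxP, by rwa [mem_ofPred_eq, hpure x ⟨hxP, hxE⟩]⟩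
    calc 𝒟 (P ∩ {x | h x ≠ smoothVal 𝒟 f P}) ≤ 𝒟 P := measure_mono inter_subset_left
      _ ≤ 2 * 𝒟 (P ∩ {x | f x ≠ c}) := measure_le_two_mul_of_smoothVal_ne 𝒟 hf hc hs
      _ ≤ 2 * (𝒟 (P ∩ E) + 𝒟 (P ∩ {x | f x ≠ h x})) :=
        mul_le_mul_right ((measure_mono hsub).trans (measure_union_le _ _)) _
      _ = _ := mul_add _ _ _

end Majority

section Carving

variable {d n : ℕ} (u : Fin n → Euc d) (R : ℝ) (σ : Equiv.Perm (Fin n))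

lemma measurableSet_carvBlock (i : Fin n) : MeasurableSet (carvBlock u R σ i) :=
  measurableSet_ball.diff (.biUnion (to_countable _) fun _ _ => measurableSet_ball)

open Function in
lemma pairwise_disjoint_carvBlock : Pairwise (Disjoint on carvBlock u R σ) := by
  intro i i' hne
  refine disjoint_left.mpr fun x ⟨hx, hx'⟩ ⟨hy, hy'⟩ => ?_
  rcases lt_or_gt_of_ne (σ.injective.ne hne) with hlt | hlt
  · exact hy' (mem_biUnion hlt hx)
  · exact hx' (mem_biUnion hlt hy)

lemma sum_measure_carvBlock_inter_le (𝒟 : Measure (Euc d)) {A : Set (Euc d)}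
    (hA : MeasurableSet A) : ∑ i, 𝒟 (carvBlock u R σ i ∩ A) ≤ 𝒟 A := by
  rw [← measure_biUnion_finset (fun i _ i' _ hne => (pairwise_disjoint_carvBlock u R σ hne).mono
    inter_subset_left inter_subset_left) fun i _ => (measurableSet_carvBlock u R σ i).inter hA]
  exact measure_mono (iUnion₂_subset fun _ _ => inter_subset_right)

def IsPadded (ε : ℝ) (x : Euc d) : Prop :=
  ∃ j, dist x (u j) + ε ≤ R ∧ ∀ j', σ j' < σ j → R + ε ≤ dist x (u j')

variable {u R σ}

lemma IsPadded.exists_ball_subset_carvBlock {ε : ℝ} {x : Euc d} (hx : IsPadded u R σ ε x) :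
    ∃ i, ball x ε ⊆ carvBlock u R σ i := by
  obtain ⟨j, hj, hfirst⟩ := hx
  refine ⟨j, fun y hy => ⟨?_, fun hmem => ?_⟩⟩
  · rw [mem_ball] at hy ⊢
    linarith [dist_triangle y x (u j)]
  · obtain ⟨j', hj', hyj'⟩ := mem_iUnion₂.mp hmem
    rw [mem_ball] at hy hyj'
    linarith [dist_triangle_left x (u j') y, hfirst j' hj']

end Carving

section Labels

variable {d : ℕ} {h : Euc d → ℝ} {E : Set (Euc d)} {r : ℝ}

lemma label_eq_of_dist_lt (hh : IsClassifier h)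
    (hsep : ENNReal.ofReal r ≤ setEDist (h ⁻¹' {-1} \ E) (h ⁻¹' {1} \ E))
    {a b : Euc d} (ha : a ∉ E) (hb : b ∉ E) (hab : dist a b < r) : h a = h b := by
  have hfar : ∀ a b : Euc d, a ∉ E → b ∉ E → h a = -1 → h b = 1 → r ≤ dist a b :=
    fun a b ha hb ha' hb' => (ENNReal.ofReal_le_ofReal_iff dist_nonneg).mp
      (edist_dist a b ▸ hsep.trans (setEDist_le_edist ⟨ha', ha⟩ ⟨hb', hb⟩))
  rcases hh.2 a with ha' | ha' <;> rcases hh.2 b with hb' | hb'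
  · rw [ha', hb']
  · linarith [hfar b a hb ha hb' ha', dist_comm a b]
  · linarith [hfar a b ha hb ha' hb']
  · rw [ha', hb']

lemma exists_label_carvBlock_diff {n : ℕ} (u : Fin n → Euc d) {R : ℝ} (σ : Equiv.Perm (Fin n))
    (hh : IsClassifier h) (hsep : ENNReal.ofReal r ≤ setEDist (h ⁻¹' {-1} \ E) (h ⁻¹' {1} \ E))
    (hR : 2 * R ≤ r) (i : Fin n) :
    ∃ c : ℝ, (c = 1 ∨ c = -1) ∧ ∀ x ∈ carvBlock u R σ i \ E, h x = c := by
  rcases (carvBlock u R σ i \ E).eq_empty_or_nonempty with hemp | ⟨x₀, hx₀⟩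
  · exact ⟨1, Or.inl rfl, by simp [hemp]⟩
  refine ⟨h x₀, hh.2 x₀, fun x hx => label_eq_of_dist_lt hh hsep hx.2 hx₀.2 ?_⟩
  have hx := hx.1.1
  have hx₀ := hx₀.1.1
  rw [mem_ball] at hx hx₀
  linarith [dist_triangle_right x x₀ (u i)]

end Labels

section DeterministicBound

variable {d n : ℕ} (𝒟 : Measure (Euc d)) {h f g : Euc d → ℝ} {u : Fin n → Euc d} {R ε : ℝ}
  {σ : Equiv.Perm (Fin n)}

/-- Outside a null set, an adversarial error at an `ε`-padded point is an error of the majority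
vote on the block containing its `ε`-ball. -/
lemma advRisk_le_measure_not_isPadded_add (hε : 0 < ε)
    (hg : ∀ x i, x ∈ carvBlock u R σ i → 𝒟 (carvBlock u R σ i) ≠ 0 →
      g x = smoothVal 𝒟 f (carvBlock u R σ i)) :
    advRisk 𝒟 h g ε ≤ 𝒟 {x | x ∈ msupport 𝒟 ∧ ¬ IsPadded u R σ ε x} +
      ∑ i, 𝒟 (carvBlock u R σ i ∩ {x | h x ≠ smoothVal 𝒟 f (carvBlock u R σ i)}) := by
  have hincl : {x | ∃ η : Euc d, ‖η‖ < ε ∧ g (x + η) ≠ h x} ⊆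
      (msupport 𝒟)ᶜ ∪ {x | x ∈ msupport 𝒟 ∧ ¬ IsPadded u R σ ε x} ∪
        ⋃ i, carvBlock u R σ i ∩ {x | h x ≠ smoothVal 𝒟 f (carvBlock u R σ i)} := by
    rintro x ⟨η, hη, hgx⟩
    by_cases hsupp : x ∈ msupport 𝒟
    · by_cases hpad : IsPadded u R σ ε x
      · obtain ⟨i, hball⟩ := hpad.exists_ball_subset_carvBlock
        have hpos : 𝒟 (carvBlock u R σ i) ≠ 0 :=
          ((hsupp ε hε).trans_le (measure_mono hball)).ne'
        have hxη : x + η ∈ ball x ε := by rwa [mem_ball, dist_eq_norm, add_sub_cancel_left]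
        refine Or.inr (mem_iUnion.mpr ⟨i, hball (mem_ball_self hε), fun he => hgx ?_⟩)
        rw [hg _ i (hball hxη) hpos, he]
      · exact Or.inl (Or.inr ⟨hsupp, hpad⟩)
    · exact Or.inl (Or.inl hsupp)
  calc advRisk 𝒟 h g ε
      ≤ 𝒟 (msupport 𝒟)ᶜ + 𝒟 {x | x ∈ msupport 𝒟 ∧ ¬ IsPadded u R σ ε x} +
        𝒟 (⋃ i, carvBlock u R σ i ∩ {x | h x ≠ smoothVal 𝒟 f (carvBlock u R σ i)}) :=
        (measure_mono hincl).trans ((measure_union_le _ _).trans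
          (add_le_add_left (measure_union_le _ _) _))
    _ ≤ _ := by
        rw [measure_compl_msupport, zero_add]
        gcongr
        exact measure_iUnion_fintype_le _ _

lemma sum_measure_carvBlock_inter_ne_smoothVal_le [IsFiniteMeasure 𝒟] (hh : IsClassifier h)
    (hf : IsClassifier f) {E : Set (Euc d)} (hE : MeasurableSet E) {r : ℝ}
    (hsep : ENNReal.ofReal r ≤ setEDist (h ⁻¹' {-1} \ E) (h ⁻¹' {1} \ E)) (hR : 2 * R ≤ r) :
    ∑ i, 𝒟 (carvBlock u R σ i ∩ {x | h x ≠ smoothVal 𝒟 f (carvBlock u R σ i)}) ≤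
      2 * 𝒟 E + 2 * risk 𝒟 h f := by
  choose c hc hpure using exists_label_carvBlock_diff u σ hh hsep hR
  have hfh : MeasurableSet {x | f x ≠ h x} := (measurableSet_eq_fun hf.1 hh.1).compl
  calc ∑ i, 𝒟 (carvBlock u R σ i ∩ {x | h x ≠ smoothVal 𝒟 f (carvBlock u R σ i)})
      ≤ ∑ i, (2 * 𝒟 (carvBlock u R σ i ∩ E) + 2 * 𝒟 (carvBlock u R σ i ∩ {x | f x ≠ h x})) :=
        Finset.sum_le_sum fun i _ => measure_inter_ne_smoothVal_le 𝒟 hf (hc i) (hpure i)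
    _ = 2 * ∑ i, 𝒟 (carvBlock u R σ i ∩ E) +
          2 * ∑ i, 𝒟 (carvBlock u R σ i ∩ {x | f x ≠ h x}) := by
        rw [Finset.sum_add_distrib, Finset.mul_sum, Finset.mul_sum]
    _ ≤ 2 * 𝒟 E + 2 * risk 𝒟 h f := by
        gcongr
        exacts [sum_measure_carvBlock_inter_le u R σ 𝒟 hE,
          sum_measure_carvBlock_inter_le u R σ 𝒟 hfh]

end DeterministicBound

section Rank

variable {ι α : Type*} [Fintype ι] [LinearOrder α] (key : ι → α)

def rankBy (j : ι) : ℕ := #{j' | key j' ≤ key j}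

lemma one_le_rankBy (j : ι) : 1 ≤ rankBy key j :=
  Finset.card_pos.mpr ⟨j, by simp⟩

lemma rankBy_le_card_filter {j : ι} {p : ι → Prop} [DecidablePred p]
    (hp : ∀ j', key j' ≤ key j → p j') : rankBy key j ≤ #{j' | p j'} :=
  Finset.card_le_card fun j' hj' => by
    simp only [Finset.mem_filter] at hj' ⊢
    exact ⟨hj'.1, hp j' hj'.2⟩

lemma rankBy_strictMono {j j' : ι} (hlt : key j < key j') : rankBy key j < rankBy key j' :=
  Finset.card_lt_card <| (Finset.ssubset_iff_of_subset fun k hk => by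
    simp only [Finset.mem_filter] at hk ⊢; exact ⟨hk.1, hk.2.trans hlt.le⟩).mpr
    ⟨j', by simp, by simpa using hlt⟩

lemma rankBy_injective (hkey : Function.Injective key) : Function.Injective (rankBy key) := by
  intro j j' he
  by_contra hne
  rcases (hkey.ne hne).lt_or_gt with hlt | hlt
  · exact (rankBy_strictMono key hlt).ne he
  · exact (rankBy_strictMono key hlt).ne he.symm

lemma sum_Icc_inv_le_one_add_log (m : ℕ) :
    ∑ k ∈ Finset.Icc 1 m, (k : ℝ≥0∞)⁻¹ ≤ ENNReal.ofReal (1 + Real.log m) := by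
  have hharm : ∑ k ∈ Finset.Icc 1 m, (k : ℝ≥0∞)⁻¹ = ENNReal.ofReal (harmonic m) := by
    rw [harmonic_eq_sum_Icc, Rat.cast_sum,
      ENNReal.ofReal_sum_of_nonneg fun k _ => by positivity]
    refine Finset.sum_congr rfl fun k hk => ?_
    rw [Rat.cast_inv, Rat.cast_natCast,
      ENNReal.ofReal_inv_of_pos (by exact_mod_cast (Finset.mem_Icc.mp hk).1),
      ENNReal.ofReal_natCast]
  exact hharm ▸ ENNReal.ofReal_le_ofReal (harmonic_le_one_add_log m)

/-- Distinct ranks bounded by `m` contribute at most the harmonic number `H_m`. -/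
lemma sum_inv_rankBy_le (hkey : Function.Injective key) (S : Finset ι) {m : ℕ}
    (hm : ∀ j ∈ S, rankBy key j ≤ m) :
    ∑ j ∈ S, (rankBy key j : ℝ≥0∞)⁻¹ ≤ ENNReal.ofReal (1 + Real.log m) := by
  classical
  calc ∑ j ∈ S, (rankBy key j : ℝ≥0∞)⁻¹ = ∑ k ∈ S.image (rankBy key), (k : ℝ≥0∞)⁻¹ :=
        (Finset.sum_image (f := fun k : ℕ => (k : ℝ≥0∞)⁻¹)
          fun _ _ _ _ he => rankBy_injective key hkey he).symm
    _ ≤ ∑ k ∈ Finset.Icc 1 m, (k : ℝ≥0∞)⁻¹ := Finset.sum_le_sum_of_subset fun k hk => by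
        obtain ⟨j, hj, rfl⟩ := Finset.mem_image.mp hk
        exact Finset.mem_Icc.mpr ⟨one_le_rankBy key j, hm j hj⟩
    _ ≤ ENNReal.ofReal (1 + Real.log m) := sum_Icc_inv_le_one_add_log m

end Rank

section PaddingProbability

variable {d n : ℕ} {u : Fin n → Euc d} {x : Euc d} {ε Δ : ℝ}

def distKey (u : Fin n → Euc d) (x : Euc d) (j : Fin n) : ℝ ×ₗ Fin n := toLex (dist x (u j), j)

lemma distKey_injective : Function.Injective (distKey u x) := fun _ _ he =>
  (Prod.ext_iff.mp (toLex.injective he)).2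

lemma dist_le_of_distKey_le {j j' : Fin n} (hle : distKey u x j' ≤ distKey u x j) :
    dist x (u j') ≤ dist x (u j) := by
  rcases Prod.Lex.toLex_le_toLex.mp hle with hlt | ⟨heq, -⟩
  exacts [hlt.le, heq.le]

/-- The pairs `(R, σ)` such that the sphere of radius `R` around `u j` meets `ball x ε` and `j`
comes first in `σ` among the net points whose `R`-ball meets `ball x ε`. -/
def cutEvent (u : Fin n → Euc d) (ε : ℝ) (x : Euc d) (j : Fin n) :
    Set (ℝ × Equiv.Perm (Fin n)) :=
  {p | p.1 ∈ Ioo (dist x (u j) - ε) (dist x (u j) + ε) ∧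
    ∀ j', dist x (u j') < p.1 + ε → j' ≠ j → p.2 j < p.2 j'}

lemma measurableSet_cutEvent (j : Fin n) : MeasurableSet (cutEvent u ε x j) :=
  measurable_mem.mp (measurable_from_prod_countable_left fun σ => by
    simp only [cutEvent, mem_ofPred_eq, mem_Ioo]
    fun_prop)

lemma exists_mem_cutEvent_of_not_isPadded {R : ℝ} {σ : Equiv.Perm (Fin n)}
    (hreach : ∃ i, dist x (u i) < R + ε) (hnp : ¬ IsPadded u R σ ε x) :
    ∃ j, dist x (u j) < R + ε ∧ (R, σ) ∈ cutEvent u ε x j := by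
  classical
  set J : Finset (Fin n) := {j | dist x (u j) < R + ε}
  have hJ : J.Nonempty := hreach.imp fun i hi => by simpa [J] using hi
  obtain ⟨j, hjJ, hfirst⟩ := J.exists_min_image σ hJ
  have hj : dist x (u j) < R + ε := by simpa [J] using hjJ
  have hmemJ : ∀ j', dist x (u j') < R + ε → j' ∈ J := fun j' hj' => by simpa [J] using hj'
  refine ⟨j, hj, ⟨by linarith, ?_⟩, fun j' hj' hne =>
    (hfirst j' (hmemJ j' hj')).lt_of_ne fun he => hne (σ.injective he).symm⟩
  by_contra! hfar
  refine hnp ⟨j, by linarith, fun j' hj' => ?_⟩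
  by_contra! hclose
  exact (hfirst j' (hmemJ j' hclose)).not_gt hj'

/-- Given the cut radius, `j` is first among at least `rankBy (distKey u x) j` competitors,
and the radius hits an interval of length `2ε` with density `4 / Δ`. -/
lemma carvMeasure_cutEvent_le (hΔ : 0 < Δ) (j : Fin n) :
    carvMeasure Δ n (cutEvent u ε x j) ≤
      (rankBy (distKey u x) j : ℝ≥0∞)⁻¹ * ENNReal.ofReal (8 * ε / Δ) := by
  classical
  set I := Ioo (dist x (u j) - ε) (dist x (u j) + ε)
  have hslice : ∀ R, unifPerm n (Prod.mk R ⁻¹' cutEvent u ε x j) ≤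
      I.indicator (fun _ => (rankBy (distKey u x) j : ℝ≥0∞)⁻¹) R := by
    intro R
    by_cases hR : R ∈ I
    · set J : Finset (Fin n) := {j' | dist x (u j') < R + ε}
      have hjJ : j ∈ J := by
        simp only [J, Finset.mem_filter, Finset.mem_univ, true_and]
        linarith [hR.1]
      have hrank : rankBy (distKey u x) j ≤ #J := rankBy_le_card_filter _ fun j' hj' => by
        linarith [dist_le_of_distKey_le hj', hR.1]
      rw [indicator_of_mem hR]
      calc unifPerm n (Prod.mk R ⁻¹' cutEvent u ε x j)
          ≤ unifPerm n {σ | ∀ k ∈ J, k ≠ j → σ j < σ k} :=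
            measure_mono fun σ hσ k hk hne => hσ.2 k (by simpa [J] using hk) hne
        _ ≤ (#J : ℝ≥0∞)⁻¹ := unifPerm_isFirst_le J hjJ
        _ ≤ _ := ENNReal.inv_le_inv.mpr (by exact_mod_cast hrank)
    · rw [indicator_of_notMem hR,
        eq_empty_of_forall_notMem (s := Prod.mk R ⁻¹' cutEvent u ε x j) fun σ hσ => hR hσ.1,
        measure_empty]
  rw [carvMeasure, Measure.prod_apply (measurableSet_cutEvent j)]
  calc ∫⁻ R, unifPerm n (Prod.mk R ⁻¹' cutEvent u ε x j) ∂unifIoc (Δ / 4) (Δ / 2)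
      ≤ ∫⁻ R, I.indicator (fun _ => (rankBy (distKey u x) j : ℝ≥0∞)⁻¹) R
          ∂unifIoc (Δ / 4) (Δ / 2) := lintegral_mono hslice
    _ = (rankBy (distKey u x) j : ℝ≥0∞)⁻¹ * unifIoc (Δ / 4) (Δ / 2) I := by
        rw [lintegral_indicator measurableSet_Ioo, setLIntegral_const]
    _ ≤ _ := by
        gcongr
        refine (unifIoc_le I measurableSet_Ioo).trans_eq ?_
        rw [Real.volume_Ioo, ← ENNReal.ofReal_inv_of_pos (by linarith),
          ← ENNReal.ofReal_mul (inv_nonneg.mpr (by linarith))]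
        congr 1
        field_simp
        ring

lemma carvMeasure_not_isPadded_le (hε : 0 < ε) (hΔ : 0 < Δ) (h2ε : 2 * ε ≤ Δ)
    (hx : ∃ i, dist x (u i) < Δ / 4) {m : ℕ} (hm : #{j | dist x (u j) < Δ} ≤ m) :
    carvMeasure Δ n {p | p.1 ∈ Ioc (Δ / 4) (Δ / 2) ∧ ¬ IsPadded u p.1 p.2 ε x} ≤
      ENNReal.ofReal (8 * ε / Δ * (1 + Real.log m)) := by
  classical
  set S : Finset (Fin n) := {j | dist x (u j) < Δ / 2 + ε}
  have hcover : {p : ℝ × Equiv.Perm (Fin n) | p.1 ∈ Ioc (Δ / 4) (Δ / 2) ∧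
      ¬ IsPadded u p.1 p.2 ε x} ⊆ ⋃ j ∈ S, cutEvent u ε x j := by
    rintro ⟨R, σ⟩ ⟨hR, hnp⟩
    dsimp only at hR hnp
    obtain ⟨j, hj, hcut⟩ := exists_mem_cutEvent_of_not_isPadded
      (hx.imp fun i hi => by linarith [hR.1]) hnp
    refine mem_biUnion ?_ hcut
    simp only [S, Finset.coe_filter, Finset.mem_univ, true_and, mem_ofPred_eq]
    linarith [hR.2]
  have hrank : ∀ j ∈ S, rankBy (distKey u x) j ≤ m := fun j hj =>
    (rankBy_le_card_filter _ fun j' hj' => by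
      have := (Finset.mem_filter.mp hj).2
      linarith [dist_le_of_distKey_le hj']).trans hm
  calc _ ≤ carvMeasure Δ n (⋃ j ∈ S, cutEvent u ε x j) := measure_mono hcover
    _ ≤ ∑ j ∈ S, (rankBy (distKey u x) j : ℝ≥0∞)⁻¹ * ENNReal.ofReal (8 * ε / Δ) :=
        (measure_biUnion_finset_le _ _).trans
          (Finset.sum_le_sum fun j _ => carvMeasure_cutEvent_le hΔ j)
    _ ≤ ENNReal.ofReal (1 + Real.log m) * ENNReal.ofReal (8 * ε / Δ) := by
        rw [← Finset.sum_mul]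
        gcongr
        exact sum_inv_rankBy_le _ distKey_injective S hrank
    _ = _ := by
        rw [← ENNReal.ofReal_mul (by linarith [Real.log_natCast_nonneg m]), mul_comm]

end PaddingProbability

section ExpectedRisk

variable {d n : ℕ} (𝒟 : Measure (Euc d)) {u : Fin n → Euc d} {ε Δ : ℝ}

lemma measurableSet_not_isPadded (u : Fin n → Euc d) (ε a b : ℝ) :
    MeasurableSet {q : (ℝ × Equiv.Perm (Fin n)) × Euc d |
      q.2 ∈ msupport 𝒟 ∧ q.1.1 ∈ Ioc a b ∧ ¬ IsPadded u q.1.1 q.1.2 ε q.2} := by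
  have hσ : ∀ σ : Equiv.Perm (Fin n), Measurable fun y : ℝ × Euc d =>
      y.2 ∈ msupport 𝒟 ∧ y.1 ∈ Ioc a b ∧ ¬ IsPadded u y.1 σ ε y.2 := fun σ => by
    have := (isClosed_msupport 𝒟).measurableSet
    simp only [IsPadded, mem_Ioc]
    fun_prop
  have hmeas : Measurable fun y : (ℝ × Euc d) × Equiv.Perm (Fin n) =>
      y.1.2 ∈ msupport 𝒟 ∧ y.1.1 ∈ Ioc a b ∧ ¬ IsPadded u y.1.1 y.2 ε y.1.2 :=
    measurable_from_prod_countable_left hσ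
  have hswap : Measurable fun q : (ℝ × Equiv.Perm (Fin n)) × Euc d => ((q.1.1, q.2), q.1.2) := by
    fun_prop
  exact hswap hmeas.setOf

lemma lintegral_measure_not_isPadded_le [IsProbabilityMeasure 𝒟] (hε : 0 < ε) (hΔ : 0 < Δ)
    (h2ε : 2 * ε ≤ Δ) (hcov : msupport 𝒟 ⊆ ⋃ i, ball (u i) (Δ / 4)) {m : ℕ}
    (hm : ∀ x ∈ msupport 𝒟, #{j | dist x (u j) < Δ} ≤ m) :
    ∫⁻ p, 𝒟 {x | x ∈ msupport 𝒟 ∧ ¬ IsPadded u p.1 p.2 ε x} ∂carvMeasure Δ n ≤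
      ENNReal.ofReal (8 * ε / Δ * (1 + Real.log m)) := by
  have := isProbabilityMeasure_carvMeasure (n := n) hΔ
  set T := {q : (ℝ × Equiv.Perm (Fin n)) × Euc d |
    q.2 ∈ msupport 𝒟 ∧ q.1.1 ∈ Ioc (Δ / 4) (Δ / 2) ∧ ¬ IsPadded u q.1.1 q.1.2 ε q.2}
  have hT := measurableSet_not_isPadded 𝒟 u ε (Δ / 4) (Δ / 2)
  calc ∫⁻ p, 𝒟 {x | x ∈ msupport 𝒟 ∧ ¬ IsPadded u p.1 p.2 ε x} ∂carvMeasure Δ n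
      = ∫⁻ p, 𝒟 (Prod.mk p ⁻¹' T) ∂carvMeasure Δ n := by
        refine lintegral_congr_ae (ae_carvMeasure_mem_Ioc.mono fun p hp => ?_)
        refine congrArg 𝒟 (ext fun x => ?_)
        simp only [T, mem_preimage, mem_ofPred_eq]
        tauto
    _ = ∫⁻ x, carvMeasure Δ n ((·, x) ⁻¹' T) ∂𝒟 := by
        rw [← Measure.prod_apply hT, Measure.prod_apply_symm hT]
    _ ≤ ∫⁻ _, ENNReal.ofReal (8 * ε / Δ * (1 + Real.log m)) ∂𝒟 := by
        refine lintegral_mono fun x => ?_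
        by_cases hx : x ∈ msupport 𝒟
        · refine (measure_mono fun p hp => hp.2).trans
            (carvMeasure_not_isPadded_le hε hΔ h2ε ?_ (hm x hx))
          simpa using hcov hx
        · simp [T, hx]
    _ = _ := by rw [lintegral_const, measure_univ, mul_one]

lemma lintegral_advRisk_le [IsProbabilityMeasure 𝒟] {h f : Euc d → ℝ} (hh : IsClassifier h)
    (hf : IsClassifier f) (hε : 0 < ε) (hΔ : 0 < Δ) (h2ε : 2 * ε ≤ Δ)
    (hcov : msupport 𝒟 ⊆ ⋃ i, ball (u i) (Δ / 4)) {m : ℕ}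
    (hm : ∀ x ∈ msupport 𝒟, #{j | dist x (u j) < Δ} ≤ m)
    {g : ℝ → Equiv.Perm (Fin n) → Euc d → ℝ}
    (hg : ∀ R σ x i, x ∈ carvBlock u R σ i → 𝒟 (carvBlock u R σ i) ≠ 0 →
      g R σ x = smoothVal 𝒟 f (carvBlock u R σ i)) :
    ∫⁻ p, advRisk 𝒟 h (g p.1 p.2) ε ∂carvMeasure Δ n ≤
      2 * sep 𝒟 h Δ + 2 * risk 𝒟 h f + ENNReal.ofReal (8 * ε / Δ * (1 + Real.log m)) := by
  have := isProbabilityMeasure_carvMeasure (n := n) hΔ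
  rw [add_assoc]
  refine le_two_mul_sep_add 𝒟 h fun E hE hsep => ?_
  calc ∫⁻ p, advRisk 𝒟 h (g p.1 p.2) ε ∂carvMeasure Δ n
      ≤ ∫⁻ p, 2 * 𝒟 E + 2 * risk 𝒟 h f +
          𝒟 {x | x ∈ msupport 𝒟 ∧ ¬ IsPadded u p.1 p.2 ε x} ∂carvMeasure Δ n := by
        refine lintegral_mono_ae (ae_carvMeasure_mem_Ioc.mono fun p hp => ?_)
        rw [add_comm _ (𝒟 _)]
        refine (advRisk_le_measure_not_isPadded_add 𝒟 hε (hg p.1 p.2)).trans ?_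
        gcongr
        exact sum_measure_carvBlock_inter_ne_smoothVal_le 𝒟 hh hf hE hsep (by linarith [hp.2])
    _ ≤ 2 * 𝒟 E + (2 * risk 𝒟 h f + ENNReal.ofReal (8 * ε / Δ * (1 + Real.log m))) := by
        rw [lintegral_add_left measurable_const, lintegral_const, measure_univ, mul_one, add_assoc]
        gcongr
        exact lintegral_measure_not_isPadded_le 𝒟 hε hΔ h2ε hcov hm

lemma lintegral_advRisk_le_one [IsProbabilityMeasure 𝒟] (h : Euc d → ℝ) (hΔ : 0 < Δ)
    (g : ℝ → Equiv.Perm (Fin n) → Euc d → ℝ) :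
    ∫⁻ p, advRisk 𝒟 h (g p.1 p.2) ε ∂carvMeasure Δ n ≤ 1 := by
  have := isProbabilityMeasure_carvMeasure (n := n) hΔ
  calc ∫⁻ p, advRisk 𝒟 h (g p.1 p.2) ε ∂carvMeasure Δ n ≤ ∫⁻ _, 1 ∂carvMeasure Δ n :=
        lintegral_mono fun _ => prob_le_one
    _ = 1 := by rw [lintegral_const, measure_univ, one_mul]

end ExpectedRisk

/-- Theorem 3 (low-dimensional support, doubling-dimension form): there is a
universal constant `C > 0` such that the following holds.  Let `(𝒟, h)` be a
separable binary classification task on `ℝ^d` with `supp(𝒟)` bounded, `f` a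
measurable classifier, `ε > 0`, `β > 1`, and suppose the `εβ`-doubling
dimension of `supp(𝒟)` (with the inherited `ℓ₂` metric) is at most `d'`.  Let
`g_{R,σ}` be the smoothed classifier obtained from the ball carving partition
of `supp(𝒟)` with parameter `εβ`.  Then
`𝔼_{R,σ}[AR(g, ε)] ≤ 2·S(εβ) + 2·R(f) + C·(d'+1)/β`, and moreover, if
`AR(ε) > 0`, then
`𝔼_{R,σ}[AR(g, ε)] ≤ (2·S(εβ)/S(2ε))·AR(ε) + 2·R(f) + C·(d'+1)/β`. -/
theorem stmt15 : ∃ C : ℝ, 0 < C ∧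
    ∀ (d n : ℕ) (𝒟 : Measure (Euc d)), IsProbabilityMeasure 𝒟 →
    Bornology.IsBounded (msupport 𝒟) →
    ∀ h : Euc d → ℝ, IsClassifier h →
    ∀ f : Euc d → ℝ, IsClassifier f →
    ∀ (ε β : ℝ), 0 < ε → 1 < β →
    -- the `εβ`-doubling dimension of `supp(𝒟)` is at most `d'`
    ∀ d' : ℝ, ddim (msupport 𝒟) (ε * β) ≤ d' →
    -- `u` is a finite `εβ/4`-net of `supp(𝒟)`
    ∀ u : Fin n → Euc d, (∀ i, u i ∈ msupport 𝒟) →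
    (∀ i j, i ≠ j → ε * β / 4 ≤ dist (u i) (u j)) →
    msupport 𝒟 ⊆ (⋃ i, ball (u i) (ε * β / 4)) →
    -- the smoothed classifiers
    ∀ g : ℝ → Equiv.Perm (Fin n) → Euc d → ℝ,
    (∀ R σ, IsClassifier (g R σ)) →
    (∀ (R : ℝ) (σ : Equiv.Perm (Fin n)) (x : Euc d) (i : Fin n),
      x ∈ carvBlock u R σ i → 𝒟 (carvBlock u R σ i) ≠ 0 →
      g R σ x = smoothVal 𝒟 f (carvBlock u R σ i)) →
    ((∫⁻ p, advRisk 𝒟 h (g p.1 p.2) ε ∂(carvMeasure (ε * β) n)) ≤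
        2 * sep 𝒟 h (ε * β) + 2 * risk 𝒟 h f +
          ENNReal.ofReal (C * (d' + 1) / β) ∧
      (0 < optAdvRisk 𝒟 h ε →
        (∫⁻ p, advRisk 𝒟 h (g p.1 p.2) ε ∂(carvMeasure (ε * β) n)) ≤
          2 * sep 𝒟 h (ε * β) / sep 𝒟 h (2 * ε) * optAdvRisk 𝒟 h ε +
            2 * risk 𝒟 h f + ENNReal.ofReal (C * (d' + 1) / β))) := by
  refine ⟨32, by norm_num, ?_⟩
  intro d n 𝒟 _ _ h hh f hf ε β hε hβ d' hd' u hu husep hcov g _ hg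
  have hεβ : 0 < ε * β := by positivity
  have hmain : ∫⁻ p, advRisk 𝒟 h (g p.1 p.2) ε ∂carvMeasure (ε * β) n ≤
      2 * sep 𝒟 h (ε * β) + 2 * risk 𝒟 h f + ENNReal.ofReal (32 * (d' + 1) / β) := by
    rcases lt_or_ge β 2 with hβ2 | hβ2
    · have hd'0 : 0 ≤ d' := (ddim_nonneg _).trans hd'
      have hone : 1 ≤ ENNReal.ofReal (32 * (d' + 1) / β) :=
        ENNReal.one_le_ofReal.mpr ((one_le_div (by linarith)).mpr (by linarith))
      exact (lintegral_advRisk_le_one 𝒟 h hεβ g).trans (hone.trans le_add_self)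
    · refine (lintegral_advRisk_le 𝒟 hh hf hε hεβ (by nlinarith) hcov
        (fun x hx => card_dist_lt_le_doublingConstant_pow hεβ hu husep hx) hg).trans ?_
      gcongr
      exact eight_mul_div_mul_one_add_log_pow_four_le hε (by linarith) hd'
  refine ⟨hmain, fun hAR => hmain.trans ?_⟩
  gcongr ?_ + _ + _
  exact le_div_mul_of_le _ (sep_two_mul_le_optAdvRisk 𝒟 h ε) hAR
    (ne_top_of_le_ne_top ENNReal.one_ne_top (sep_le_one 𝒟 h _))
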